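/- arXiv:2304.06938 — 4 statements merged into one kernel-verified Lean document; each statement's English description precedes it below -/
import Mathlib

section
/- If X and Y are comonotonic real random variables (i.e., (X(ω)-X(ω'))(Y(ω)-Y(ω')) ≥ 0 for P×P-almost every (ω,ω')), then the quantile function of X+Y equals the sum of the quantile functions of X and Y almost everywhere on (0,1): Q_{X+Y} = Q_X + Q_Y a.e. -/
noncomputable def quantile {Ω : Type*} [MeasurableSpace Ω] (P : MeasureTheory.Measure Ω) (Y : Ω → ℝ) (t : ℝ) : ℝ :=
  sInf {z : ℝ | P {ω | Y ω ≤ z} > ENNReal.ofReal t}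

/-!
Comonotonicity makes sublevel sets of `X` and `Y` nested up to null sets: a point of
`{X ≤ α} \ {Y ≤ β}` and a point of `{Y ≤ β} \ {X ≤ α}` form a discordant pair, and discordant
pairs are `P ⊗ P`-null, so one of the two differences is `P`-null. Hence
`P(X ≤ α, Y ≤ β) ≥ min (P(X ≤ α)) (P(Y ≤ β))` and `P(X ≤ α ∨ Y ≤ β) ≤ max (P(X ≤ α)) (P(Y ≤ β))`.
Taking `α, β` slightly above (resp. below) `Q_X(t), Q_Y(t)` squeezes `Q_{X+Y}(t)` onto
`Q_X(t) + Q_Y(t)`, for every `t ∈ (0, 1)`.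
-/

open MeasureTheory Filter Topology Set

section Quantile

variable {Ω : Type*} [MeasurableSpace Ω] (P : Measure Ω) {Z : Ω → ℝ} {t : ℝ}

lemma tendsto_measure_le_atTop :
    Tendsto (fun z : ℝ ↦ P {ω | Z ω ≤ z}) atTop (𝓝 (P univ)) := by
  have hmono : Monotone fun z : ℝ ↦ {ω | Z ω ≤ z} := fun _ _ hzw _ hω ↦ le_trans hω hzw
  have hunion : (⋃ z : ℝ, {ω | Z ω ≤ z}) = univ :=
    eq_univ_of_forall fun ω ↦ mem_iUnion.2 ⟨Z ω, le_refl (Z ω)⟩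
  have h := tendsto_measure_iUnion_atTop (μ := P) hmono
  rwa [hunion] at h

lemma tendsto_measure_le_atBot [IsFiniteMeasure P] (hZ : Measurable Z) :
    Tendsto (fun z : ℝ ↦ P {ω | Z ω ≤ z}) atBot (𝓝 0) := by
  have hmono : Monotone fun z : ℝ ↦ {ω | Z ω ≤ z} := fun _ _ hzw _ hω ↦ le_trans hω hzw
  have hinter : (⋂ z : ℝ, {ω | Z ω ≤ z}) = ∅ :=
    eq_empty_of_forall_notMem fun ω hω ↦ by
      have h : Z ω ≤ Z ω - 1 := mem_iInter.1 hω (Z ω - 1)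
      linarith
  have h := tendsto_measure_iInter_atBot (μ := P) (s := fun z : ℝ ↦ {ω | Z ω ≤ z})
    (fun z ↦ (hZ measurableSet_Iic).nullMeasurableSet) hmono ⟨0, measure_ne_top P _⟩
  rwa [hinter, measure_empty] at h

variable [IsProbabilityMeasure P]

lemma quantile_set_nonempty (ht1 : t < 1) :
    {z : ℝ | P {ω | Z ω ≤ z} > ENNReal.ofReal t}.Nonempty := by
  have hlt : ENNReal.ofReal t < P univ := by simpa using ENNReal.ofReal_lt_one.2 ht1
  exact ((tendsto_measure_le_atTop P).eventually (eventually_gt_nhds hlt)).exists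

lemma quantile_set_bddBelow (hZ : Measurable Z) (ht0 : 0 < t) :
    BddBelow {z : ℝ | P {ω | Z ω ≤ z} > ENNReal.ofReal t} := by
  obtain ⟨b, hb⟩ := eventually_atBot.1 <|
    (tendsto_measure_le_atBot P hZ).eventually (eventually_lt_nhds (ENNReal.ofReal_pos.2 ht0))
  refine ⟨b, fun z hz ↦ le_of_not_gt fun hzb ↦ ?_⟩
  exact (hb z hzb.le).not_gt hz

lemma measure_le_of_lt_quantile (hZ : Measurable Z) (ht0 : 0 < t) {z : ℝ}
    (hz : z < quantile P Z t) : P {ω | Z ω ≤ z} ≤ ENNReal.ofReal t :=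
  le_of_not_gt fun h ↦ (csInf_le (quantile_set_bddBelow P hZ ht0) h).not_gt hz

lemma lt_measure_of_quantile_lt (hZ : Measurable Z) (ht0 : 0 < t) (ht1 : t < 1) {z : ℝ}
    (hz : quantile P Z t < z) : ENNReal.ofReal t < P {ω | Z ω ≤ z} := by
  obtain ⟨w, hw, hwz⟩ :=
    (csInf_lt_iff (quantile_set_bddBelow P hZ ht0) (quantile_set_nonempty P ht1)).1 hz
  exact hw.trans_le (measure_mono fun ω hω ↦ le_trans hω hwz.le)

lemma le_quantile_of_forall (ht1 : t < 1) {c : ℝ}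
    (h : ∀ z < c, P {ω | Z ω ≤ z} ≤ ENNReal.ofReal t) : c ≤ quantile P Z t :=
  le_csInf (quantile_set_nonempty P ht1) fun z hz ↦ le_of_not_gt fun hzc ↦ (h z hzc).not_gt hz

lemma quantile_le_of_forall (hZ : Measurable Z) (ht0 : 0 < t) {c : ℝ}
    (h : ∀ z > c, ENNReal.ofReal t < P {ω | Z ω ≤ z}) : quantile P Z t ≤ c :=
  le_of_forall_pos_le_add fun _ hε ↦
    csInf_le (quantile_set_bddBelow P hZ ht0) (h _ (lt_add_of_pos_right c hε))

end Quantile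

def AEComonotone {Ω : Type*} [MeasurableSpace Ω] (P : Measure Ω) (X Y : Ω → ℝ) : Prop :=
  ∀ᵐ p : Ω × Ω ∂(P.prod P), 0 ≤ (X p.1 - X p.2) * (Y p.1 - Y p.2)

namespace AEComonotone

variable {Ω : Type*} [MeasurableSpace Ω] {P : Measure Ω} {X Y : Ω → ℝ}

lemma measure_sdiff_eq_zero_or [SFinite P] (h : AEComonotone P X Y) {S T : Set ℝ}
    (hS : IsLowerSet S) (hT : IsLowerSet T) :
    P (X ⁻¹' S \ Y ⁻¹' T) = 0 ∨ P (Y ⁻¹' T \ X ⁻¹' S) = 0 := by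
  have hdiscordant : (X ⁻¹' S \ Y ⁻¹' T) ×ˢ (Y ⁻¹' T \ X ⁻¹' S) ⊆
      {p : Ω × Ω | ¬ 0 ≤ (X p.1 - X p.2) * (Y p.1 - Y p.2)} := by
    rintro ⟨ω, ω'⟩ ⟨⟨hXω, hYω⟩, hYω', hXω'⟩
    have hXlt : X ω < X ω' := lt_of_not_ge fun hle ↦ hXω' (hS hle hXω)
    have hYlt : Y ω' < Y ω := lt_of_not_ge fun hle ↦ hYω (hT hle hYω')
    exact not_le.2 (mul_neg_of_neg_of_pos (sub_neg.2 hXlt) (sub_pos.2 hYlt))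
  have hnull := measure_mono_null hdiscordant (ae_iff.1 h)
  rwa [Measure.prod_prod, mul_eq_zero] at hnull

variable [SFinite P] {S T : Set ℝ}

lemma min_measure_le_measure_inter (h : AEComonotone P X Y) (hS : IsLowerSet S)
    (hT : IsLowerSet T) : min (P (X ⁻¹' S)) (P (Y ⁻¹' T)) ≤ P (X ⁻¹' S ∩ Y ⁻¹' T) := by
  rcases h.measure_sdiff_eq_zero_or hS hT with h0 | h0
  · simpa [h0] using min_le_left _ _ |>.trans (measure_le_inter_add_sdiff P (X ⁻¹' S) (Y ⁻¹' T))
  · rw [inter_comm]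
    simpa [h0] using min_le_right _ _ |>.trans (measure_le_inter_add_sdiff P (Y ⁻¹' T) (X ⁻¹' S))

lemma measure_union_le_max (h : AEComonotone P X Y) (hS : IsLowerSet S)
    (hT : IsLowerSet T) : P (X ⁻¹' S ∪ Y ⁻¹' T) ≤ max (P (X ⁻¹' S)) (P (Y ⁻¹' T)) := by
  rcases h.measure_sdiff_eq_zero_or hS hT with h0 | h0
  · calc P (X ⁻¹' S ∪ Y ⁻¹' T) = P (Y ⁻¹' T ∪ (X ⁻¹' S \ Y ⁻¹' T)) := by
          rw [union_sdiff_self, union_comm]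
      _ ≤ P (Y ⁻¹' T) + P (X ⁻¹' S \ Y ⁻¹' T) := measure_union_le _ _
      _ ≤ max (P (X ⁻¹' S)) (P (Y ⁻¹' T)) := by rw [h0, add_zero]; exact le_max_right _ _
  · calc P (X ⁻¹' S ∪ Y ⁻¹' T) = P (X ⁻¹' S ∪ (Y ⁻¹' T \ X ⁻¹' S)) := by rw [union_sdiff_self]
      _ ≤ P (X ⁻¹' S) + P (Y ⁻¹' T \ X ⁻¹' S) := measure_union_le _ _
      _ ≤ max (P (X ⁻¹' S)) (P (Y ⁻¹' T)) := by rw [h0, add_zero]; exact le_max_left _ _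

theorem quantile_add [IsProbabilityMeasure P] (h : AEComonotone P X Y) (hX : Measurable X)
    (hY : Measurable Y) {t : ℝ} (ht0 : 0 < t) (ht1 : t < 1) :
    quantile P (fun ω ↦ X ω + Y ω) t = quantile P X t + quantile P Y t := by
  set a := quantile P X t with ha
  set b := quantile P Y t with hb
  apply le_antisymm
  · refine quantile_le_of_forall P (hX.add hY) ht0 fun z hz ↦ ?_
    set ε := (z - a - b) / 2 with hε
    calc ENNReal.ofReal t
        < min (P (X ⁻¹' Iic (a + ε))) (P (Y ⁻¹' Iic (b + ε))) :=
          lt_min (lt_measure_of_quantile_lt P hX ht0 ht1 (by linarith))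
            (lt_measure_of_quantile_lt P hY ht0 ht1 (by linarith))
      _ ≤ P (X ⁻¹' Iic (a + ε) ∩ Y ⁻¹' Iic (b + ε)) :=
          h.min_measure_le_measure_inter (isLowerSet_Iic _) (isLowerSet_Iic _)
      _ ≤ P {ω | X ω + Y ω ≤ z} := measure_mono fun ω ⟨hXω, hYω⟩ ↦ by
          simp only [mem_preimage, mem_Iic] at hXω hYω
          show X ω + Y ω ≤ z
          linarith
  · refine le_quantile_of_forall P ht1 fun z hz ↦ ?_
    set ε := (a + b - z) / 2 with hε
    calc P {ω | X ω + Y ω ≤ z}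
        ≤ P (X ⁻¹' Iic (a - ε) ∪ Y ⁻¹' Iic (b - ε)) := measure_mono fun ω hω ↦ by
          replace hω : X ω + Y ω ≤ z := hω
          by_contra hout
          simp only [mem_union, mem_preimage, mem_Iic, not_or, not_le] at hout
          linarith
      _ ≤ max (P (X ⁻¹' Iic (a - ε))) (P (Y ⁻¹' Iic (b - ε))) :=
          h.measure_union_le_max (isLowerSet_Iic _) (isLowerSet_Iic _)
      _ ≤ ENNReal.ofReal t :=
          max_le (measure_le_of_lt_quantile P hX ht0 (by linarith))
            (measure_le_of_lt_quantile P hY ht0 (by linarith))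

end AEComonotone

theorem stmt_5 {Ω : Type*} [MeasurableSpace Ω] (P : MeasureTheory.Measure Ω)
    [MeasureTheory.IsProbabilityMeasure P] (X Y : Ω → ℝ)
    (hX : Measurable X) (hY : Measurable Y)
    (hcom : ∀ᵐ p : Ω × Ω ∂(P.prod P), 0 ≤ (X p.1 - X p.2) * (Y p.1 - Y p.2)) :
    ∀ᵐ t ∂(MeasureTheory.volume.restrict (Set.Ioo (0:ℝ) 1)),
      quantile P (fun ω => X ω + Y ω) t = quantile P X t + quantile P Y t :=
  ae_restrict_of_forall_mem measurableSet_Ioo fun _ ht ↦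
    AEComonotone.quantile_add hcom hX hY ht.1 ht.2
end

section
/- If X₁ ≥ X₂ a.s. and P(X₁ > X₂) > 0, then Q_{X₁} ≥ Q_{X₂} everywhere on (0,1) and Q_{X₁}(t) > Q_{X₂}(t) for some t ∈ (0,1); moreover Q_{X₁} > Q_{X₂} on some right-neighborhood of t. -/
/-! On `(0, 1)` the quantile of `Y` is the generalized inverse `t ↦ inf {z | t < F z}` of the
distribution function `F` of `Y`, so `X₂ ≤ X₁` a.s. gives `F₁ ≤ F₂` and hence `Q₂ ≤ Q₁`.
If moreover `P(X₂ < X₁) > 0`, some rational `q` has `P(X₂ ≤ q < X₁) > 0`, whence `F₁ q < F₂ q`.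
By right-continuity `F₁ q' < F₂ q` for some `q' > q`, and every level `s` between `F₁ q'` and
`F₂ q` has `Q₂ s ≤ q < q' ≤ Q₁ s`. -/

open MeasureTheory ProbabilityTheory Set Filter Topology

section GeneralizedInverse

variable {μ ν : Measure ℝ} {t z : ℝ}

lemma nonempty_setOf_lt_cdf (ht : t < 1) : {x | t < cdf μ x}.Nonempty :=
  ((tendsto_cdf_atTop μ).eventually (lt_mem_nhds ht)).exists

lemma bddBelow_setOf_lt_cdf (ht : 0 < t) : BddBelow {x | t < cdf μ x} := by
  obtain ⟨x₀, hx₀⟩ := ((tendsto_cdf_atBot μ).eventually (gt_mem_nhds ht)).exists_forall_of_atBot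
  exact ⟨x₀, fun x hx => le_of_not_gt fun hlt => (hx₀ x hlt.le).not_gt hx⟩

lemma sInf_setOf_lt_cdf_le (ht : 0 < t) (hz : t < cdf μ z) : sInf {x | t < cdf μ x} ≤ z :=
  csInf_le (bddBelow_setOf_lt_cdf ht) hz

lemma le_sInf_setOf_lt_cdf (ht : t < 1) (hz : cdf μ z ≤ t) : z ≤ sInf {x | t < cdf μ x} :=
  le_csInf (nonempty_setOf_lt_cdf ht) fun _ hx => ((monotone_cdf μ).reflect_lt (hz.trans_lt hx)).le

lemma sInf_setOf_lt_cdf_mono (h : ∀ x, cdf ν x ≤ cdf μ x) (ht : t ∈ Ioo 0 1) :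
    sInf {x | t < cdf μ x} ≤ sInf {x | t < cdf ν x} :=
  csInf_le_csInf (bddBelow_setOf_lt_cdf ht.1) (nonempty_setOf_lt_cdf ht.2)
    fun _ hx => hx.trans_le (h _)

lemma exists_cdf_lt_of_cdf_lt {q : ℝ} (h : cdf ν q < cdf μ q) : ∃ q' > q, cdf ν q' < cdf μ q := by
  have hcont : ContinuousWithinAt (cdf ν) (Ioi q) q :=
    ((cdf ν).right_continuous q).mono Ioi_subset_Ici_self
  exact ((hcont.eventually_lt continuousWithinAt_const h).and self_mem_nhdsWithin).exists.imp
    fun _ hq' => ⟨hq'.2, hq'.1⟩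

lemma exists_sInf_setOf_lt_cdf_lt {q : ℝ} (h : cdf ν q < cdf μ q) :
    ∃ t ∈ Ioo (0 : ℝ) 1, ∃ ε > 0, ∀ s ∈ Ico t (t + ε),
      sInf {x | s < cdf μ x} < sInf {x | s < cdf ν x} := by
  obtain ⟨q', hqq', hq'⟩ := exists_cdf_lt_of_cdf_lt h
  obtain ⟨t, hq't, htq⟩ := exists_between hq'
  have ht0 : 0 < t := (cdf_nonneg ν q').trans_lt hq't
  refine ⟨t, ⟨ht0, htq.trans_le (cdf_le_one μ q)⟩, cdf μ q - t, sub_pos.2 htq, fun s hs => ?_⟩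
  have hsq : s < cdf μ q := by linarith [hs.2]
  calc sInf {x | s < cdf μ x} ≤ q := sInf_setOf_lt_cdf_le (ht0.trans_le hs.1) hsq
    _ < q' := hqq'
    _ ≤ sInf {x | s < cdf ν x} :=
      le_sInf_setOf_lt_cdf (hsq.trans_le (cdf_le_one μ q)) (hq't.le.trans hs.1)

end GeneralizedInverse

section Law

variable {Ω : Type*} [MeasurableSpace Ω] {P : Measure Ω} [IsProbabilityMeasure P]

lemma ofReal_cdf_map {Y : Ω → ℝ} (hY : AEMeasurable Y P) (z : ℝ) :
    ENNReal.ofReal (cdf (P.map Y) z) = P {ω | Y ω ≤ z} := by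
  have := Measure.isProbabilityMeasure_map hY
  rw [ofReal_cdf, Measure.map_apply_of_aemeasurable hY measurableSet_Iic]
  rfl

lemma quantile_eq_sInf_setOf_lt_cdf {Y : Ω → ℝ} (hY : AEMeasurable Y P) {t : ℝ} (ht : 0 ≤ t) :
    quantile P Y t = sInf {x | t < cdf (P.map Y) x} := by
  simp_rw [quantile, ← ofReal_cdf_map hY, gt_iff_lt, ENNReal.ofReal_lt_ofReal_iff_of_nonneg ht]

variable {X₁ X₂ : Ω → ℝ}

lemma cdf_map_le_of_ae_le (hX₁ : AEMeasurable X₁ P) (hX₂ : AEMeasurable X₂ P)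
    (hle : ∀ᵐ ω ∂P, X₂ ω ≤ X₁ ω) (z : ℝ) :
    cdf (P.map X₁) z ≤ cdf (P.map X₂) z := by
  rw [← ENNReal.ofReal_le_ofReal_iff (cdf_nonneg _ z), ofReal_cdf_map hX₁, ofReal_cdf_map hX₂]
  exact measure_mono_ae (hle.mono fun ω h₂₁ h₁ => h₂₁.trans h₁)

lemma exists_cdf_map_lt_of_ae_le (hX₁ : AEMeasurable X₁ P) (hX₂ : AEMeasurable X₂ P)
    (hle : ∀ᵐ ω ∂P, X₂ ω ≤ X₁ ω) (hpos : 0 < P {ω | X₂ ω < X₁ ω}) :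
    ∃ q, cdf (P.map X₁) q < cdf (P.map X₂) q := by
  obtain ⟨q, hq⟩ : ∃ q : ℚ, 0 < P {ω | X₂ ω ≤ q ∧ (q : ℝ) < X₁ ω} := by
    by_contra! h
    refine hpos.ne' (measure_mono_null (fun ω (hω : X₂ ω < X₁ ω) => ?_)
      (measure_iUnion_null_iff.2 fun q => nonpos_iff_eq_zero.1 (h q)))
    obtain ⟨q, hq₂, hq₁⟩ := exists_rat_btwn hω
    exact mem_iUnion.2 ⟨q, hq₂.le, hq₁⟩
  have hdisj : Disjoint {ω | X₁ ω ≤ q} {ω | X₂ ω ≤ q ∧ (q : ℝ) < X₁ ω} :=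
    disjoint_left.2 fun _ h₁ h => h.2.not_ge h₁
  have hunion : P {ω | X₁ ω ≤ q} + P {ω | X₂ ω ≤ q ∧ (q : ℝ) < X₁ ω} ≤ P {ω | X₂ ω ≤ q} := by
    have hmeas : NullMeasurableSet {ω | X₂ ω ≤ q ∧ (q : ℝ) < X₁ ω} P :=
      (hX₂.nullMeasurable measurableSet_Iic).inter (hX₁.nullMeasurable measurableSet_Ioi)
    rw [← measure_union₀ hmeas hdisj.aedisjoint]
    exact measure_mono_ae (hle.mono fun ω h₂₁ h => h.elim h₂₁.trans And.left)
  refine ⟨q, (ENNReal.ofReal_lt_ofReal_iff_of_nonneg (cdf_nonneg _ _)).1 ?_⟩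
  rw [ofReal_cdf_map hX₁, ofReal_cdf_map hX₂]
  exact (ENNReal.lt_add_right (measure_ne_top _ _) hq.ne').trans_le hunion

end Law

theorem stmt_7 {Ω : Type*} [MeasurableSpace Ω] (P : MeasureTheory.Measure Ω)
    [MeasureTheory.IsProbabilityMeasure P] (X₁ X₂ : Ω → ℝ)
    (hX₁ : Measurable X₁) (hX₂ : Measurable X₂)
    (hle : ∀ᵐ ω ∂P, X₂ ω ≤ X₁ ω) (hpos : 0 < P {ω | X₂ ω < X₁ ω}) :
    (∀ t ∈ Set.Ioo (0:ℝ) 1, quantile P X₂ t ≤ quantile P X₁ t) ∧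
    ∃ t ∈ Set.Ioo (0:ℝ) 1, ∃ ε > 0, ∀ s ∈ Set.Ico t (t + ε),
      s < 1 → quantile P X₂ s < quantile P X₁ s := by
  have hQ : ∀ {Y : Ω → ℝ}, Measurable Y → ∀ {t : ℝ}, 0 < t →
      quantile P Y t = sInf {x | t < cdf (P.map Y) x} :=
    fun hY _ ht => quantile_eq_sInf_setOf_lt_cdf hY.aemeasurable ht.le
  refine ⟨fun t ht => ?_, ?_⟩
  · rw [hQ hX₁ ht.1, hQ hX₂ ht.1]
    exact sInf_setOf_lt_cdf_mono (cdf_map_le_of_ae_le hX₁.aemeasurable hX₂.aemeasurable hle) ht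
  · obtain ⟨q, hq⟩ := exists_cdf_map_lt_of_ae_le hX₁.aemeasurable hX₂.aemeasurable hle hpos
    obtain ⟨t, ht, ε, hε, hlt⟩ := exists_sInf_setOf_lt_cdf_lt hq
    refine ⟨t, ht, ε, hε, fun s hs _ => ?_⟩
    have hs0 : 0 < s := ht.1.trans_le hs.1
    rw [hQ hX₁ hs0, hQ hX₂ hs0]
    exact hlt s hs
end

section
/- Let ρ ≥ 0 with 0 < E[ρ] < ∞. Then there exists t₀ ∈ (0,1) such that ∫_{t₀}^1 Q_ρ(1-s) ds > (1/2) E[ρ]; consequently, for any nonnegative random variable X with E[ρX] ≤ x, one has Q_X(t₀) ≤ 2x / E[ρ]. -/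
open MeasureTheory Set Filter Topology
open scoped ENNReal

section Quantile

variable {Ω : Type*} [MeasurableSpace Ω] {P : Measure Ω} {Y : Ω → ℝ}

lemma nonneg_of_mem_quantile_set (hY : ∀ ω, 0 ≤ Y ω) {t z : ℝ}
    (hz : z ∈ {z : ℝ | P {ω | Y ω ≤ z} > ENNReal.ofReal t}) : 0 ≤ z := by
  obtain ⟨ω, hω⟩ := nonempty_of_measure_ne_zero (pos_of_gt hz).ne'
  exact (hY ω).trans hω

lemma quantile_nonneg (hY : ∀ ω, 0 ≤ Y ω) (t : ℝ) : 0 ≤ quantile P Y t :=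
  Real.sInf_nonneg fun _ hz => nonneg_of_mem_quantile_set hY hz

lemma bddBelow_quantile_set (hY : ∀ ω, 0 ≤ Y ω) (t : ℝ) :
    BddBelow {z : ℝ | P {ω | Y ω ≤ z} > ENNReal.ofReal t} :=
  ⟨0, fun _ hz => nonneg_of_mem_quantile_set hY hz⟩

lemma quantile_le_of_lt_measure (hY : ∀ ω, 0 ≤ Y ω) {t z : ℝ}
    (hz : ENNReal.ofReal t < P {ω | Y ω ≤ z}) : quantile P Y t ≤ z :=
  csInf_le (bddBelow_quantile_set hY t) hz

lemma measure_le_le_ofReal_of_lt_quantile (hY : ∀ ω, 0 ≤ Y ω) {t c : ℝ}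
    (hc : c < quantile P Y t) : P {ω | Y ω ≤ c} ≤ ENNReal.ofReal t :=
  not_lt.1 fun h => (quantile_le_of_lt_measure hY h).not_gt hc

variable [IsProbabilityMeasure P]

lemma nonempty_quantile_set {t : ℝ} (ht : t < 1) :
    {z : ℝ | P {ω | Y ω ≤ z} > ENNReal.ofReal t}.Nonempty := by
  have hunion : (⋃ z : ℝ, {ω | Y ω ≤ z}) = univ :=
    eq_univ_of_forall fun ω => mem_iUnion.2 ⟨Y ω, le_refl (Y ω)⟩
  have hmono : Monotone fun z : ℝ => {ω | Y ω ≤ z} := fun _ _ hzz' _ hω => le_trans hω hzz'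
  have hlim := tendsto_measure_iUnion_atTop (μ := P) hmono
  rw [hunion, measure_univ] at hlim
  exact (hlim.eventually_const_lt (ENNReal.ofReal_lt_one.2 ht)).exists

lemma le_quantile_of_measure_le {t u : ℝ} (hu : u < 1)
    (h : P {ω | Y ω ≤ t} ≤ ENNReal.ofReal u) : t ≤ quantile P Y u :=
  le_csInf (nonempty_quantile_set hu) fun _ hz =>
    not_lt.1 fun hzt => (h.trans_lt hz).not_ge (measure_mono fun _ hω => le_trans hω hzt.le)

lemma quantile_mono (hY : ∀ ω, 0 ≤ Y ω) {u v : ℝ} (huv : u ≤ v) (hv : v < 1) :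
    quantile P Y u ≤ quantile P Y v :=
  csInf_le_csInf (bddBelow_quantile_set hY u) (nonempty_quantile_set hv)
    fun _ hz => (ENNReal.ofReal_le_ofReal huv).trans_lt hz

end Quantile

lemma eventually_lt_lintegral_tsub_ofReal {α : Type*} [MeasurableSpace α] {μ : Measure α}
    {f : α → ℝ≥0∞} (hf : AEMeasurable f μ) {a : ℝ≥0∞} (ha : a < ∫⁻ x, f x ∂μ) :
    ∀ᶠ ε in 𝓝[>] (0 : ℝ), a < ∫⁻ x, (f x - ENNReal.ofReal ε) ∂μ := by
  have hlim : Tendsto (fun n : ℕ => ∫⁻ x, (f x - ENNReal.ofReal (1 / (n + 1))) ∂μ) atTop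
      (𝓝 (∫⁻ x, f x ∂μ)) := by
    refine lintegral_tendsto_of_tendsto_of_monotone (fun _ => hf.sub aemeasurable_const)
      (ae_of_all _ fun x m n hmn => tsub_le_tsub_left (ENNReal.ofReal_le_ofReal ?_) _)
      (ae_of_all _ fun x => ?_)
    · exact Nat.one_div_le_one_div hmn
    · simpa using ENNReal.Tendsto.sub tendsto_const_nhds
        (ENNReal.tendsto_ofReal tendsto_one_div_add_atTop_nhds_zero_nat)
        (Or.inr ENNReal.ofReal_ne_top)
  obtain ⟨n, hn⟩ := (hlim.eventually_const_lt ha).exists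
  filter_upwards [Ioo_mem_nhdsGT (Nat.one_div_pos_of_nat (n := n))] with ε hε
  exact hn.trans_le (lintegral_mono fun x => tsub_le_tsub_left (ENNReal.ofReal_le_ofReal hε.2.le) _)

section LayerCake

variable {Ω : Type*} [MeasurableSpace Ω] {ρ : Ω → ℝ}

lemma lintegral_measure_lt_tsub_le_setLIntegral {μ : Measure Ω} (hρ : Measurable ρ)
    (hρ0 : ∀ ω, 0 ≤ ρ ω) (A : Set Ω) :
    ∫⁻ t in Ioi 0, (μ {ω | t < ρ ω} - μ Aᶜ) ≤ ∫⁻ ω in A, ENNReal.ofReal (ρ ω) ∂μ := by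
  rw [lintegral_eq_lintegral_meas_lt _ (ae_of_all _ hρ0) hρ.aemeasurable]
  refine lintegral_mono fun t => tsub_le_iff_right.2 ?_
  rw [Measure.restrict_apply (measurableSet_lt measurable_const hρ)]
  exact (measure_le_inter_add_sdiff μ _ A).trans
    (add_le_add_right (measure_mono (sdiff_subset_compl _ _)) _)

variable {P : Measure Ω}

lemma lintegral_measure_lt_tsub_le_setLIntegral_quantile [IsProbabilityMeasure P]
    (hρ : Measurable ρ) (hρ0 : ∀ ω, 0 ≤ ρ ω) {b : ℝ} (hb : 0 ≤ b) :
    ∫⁻ t in Ioi 0, (P {ω | t < ρ ω} - ENNReal.ofReal b)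
      ≤ ∫⁻ s in Ioo b 1, ENNReal.ofReal (quantile P ρ (1 - s)) := by
  have hQ : AntitoneOn (fun s => quantile P ρ (1 - s)) (Ioo b 1) := fun s hs s' _ hss' =>
    quantile_mono hρ0 (by linarith) (by linarith [hs.1])
  rw [lintegral_eq_lintegral_meas_le _ (ae_of_all _ fun _ => quantile_nonneg hρ0 _)
    (aemeasurable_restrict_of_antitoneOn measurableSet_Ioo hQ)]
  refine lintegral_mono fun t => ?_
  set F := P.real {ω | ρ ω ≤ t}
  have hF : P {ω | ρ ω ≤ t} = ENNReal.ofReal F := (ofReal_measureReal (measure_ne_top _ _)).symm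
  have htail : P {ω | t < ρ ω} = ENNReal.ofReal (1 - F) := by
    have hset : {ω | t < ρ ω} = {ω | ρ ω ≤ t}ᶜ := by ext; simp
    rw [hset, prob_compl_eq_one_sub (measurableSet_le hρ measurable_const), hF,
      ENNReal.ofReal_sub _ measureReal_nonneg, ENNReal.ofReal_one]
  calc P {ω | t < ρ ω} - ENNReal.ofReal b = volume (Ioo b (1 - F)) := by
        rw [htail, Real.volume_Ioo, ENNReal.ofReal_sub _ hb]
    _ ≤ volume ({s | t ≤ quantile P ρ (1 - s)} ∩ Ioo b 1) := by
        refine measure_mono fun s hs => ⟨?_, hs.1, ?_⟩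
        · exact le_quantile_of_measure_le (by linarith [hs.1])
            (hF.trans_le (ENNReal.ofReal_le_ofReal (by linarith [hs.2])))
        · linarith [hs.2, measureReal_nonneg (μ := P) (s := {ω | ρ ω ≤ t})]
    _ = _ := (Measure.restrict_apply' measurableSet_Ioo).symm

lemma ofReal_mul_lintegral_tsub_le_of_lt_quantile (hρ : Measurable ρ) (hρ0 : ∀ ω, 0 ≤ ρ ω)
    {X : Ω → ℝ} (hX : Measurable X) (hX0 : ∀ ω, 0 ≤ X ω) {c u : ℝ} (hc : c < quantile P X u) :
    ENNReal.ofReal c * ∫⁻ t in Ioi 0, (P {ω | t < ρ ω} - ENNReal.ofReal u)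
      ≤ ∫⁻ ω, ENNReal.ofReal (ρ ω * X ω) ∂P := by
  set A := {ω | X ω ≤ c}ᶜ
  have hAc : P Aᶜ ≤ ENNReal.ofReal u := by
    simpa [A] using measure_le_le_ofReal_of_lt_quantile hX0 hc
  calc ENNReal.ofReal c * ∫⁻ t in Ioi 0, (P {ω | t < ρ ω} - ENNReal.ofReal u)
      ≤ ENNReal.ofReal c * ∫⁻ ω in A, ENNReal.ofReal (ρ ω) ∂P := by
        gcongr
        exact (lintegral_mono fun t => tsub_le_tsub_left hAc _).trans
          (lintegral_measure_lt_tsub_le_setLIntegral hρ hρ0 A)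
    _ = ∫⁻ ω in A, ENNReal.ofReal (ρ ω) * ENNReal.ofReal c ∂P := by
        rw [mul_comm, lintegral_mul_const' _ _ ENNReal.ofReal_ne_top]
    _ ≤ ∫⁻ ω in A, ENNReal.ofReal (ρ ω * X ω) ∂P := by
        refine setLIntegral_mono (hρ.mul hX).ennreal_ofReal fun ω hω => ?_
        rw [ENNReal.ofReal_mul (hρ0 ω)]
        gcongr
        exact (not_le.1 (show ¬X ω ≤ c from hω)).le
    _ ≤ _ := setLIntegral_le_lintegral _ _

end LayerCake

theorem stmt_12 {Ω : Type*} [MeasurableSpace Ω] (P : MeasureTheory.Measure Ω)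
    [MeasureTheory.IsProbabilityMeasure P] (ρ : Ω → ℝ)
    (hρ : Measurable ρ) (hρnn : ∀ ω, 0 ≤ ρ ω)
    (hint : MeasureTheory.Integrable ρ P) (hpos : 0 < ∫ ω, ρ ω ∂P)
    (x : ℝ) (hx : 0 ≤ x) :
    ∃ t₀ ∈ Set.Ioo (0:ℝ) 1,
      ENNReal.ofReal ((1/2) * ∫ ω, ρ ω ∂P)
          < ∫⁻ s in Set.Ioo t₀ 1, ENNReal.ofReal (quantile P ρ (1 - s)) ∧
      ∀ X : Ω → ℝ, Measurable X → (∀ ω, 0 ≤ X ω) →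
        (∫⁻ ω, ENNReal.ofReal (ρ ω * X ω) ∂P) ≤ ENNReal.ofReal x →
        quantile P X t₀ ≤ 2 * x / ∫ ω, ρ ω ∂P := by
  set E := ∫ ω, ρ ω ∂P
  have htail : ∫⁻ t in Ioi 0, P {ω | t < ρ ω} = ENNReal.ofReal E := by
    rw [← lintegral_eq_lintegral_meas_lt P (ae_of_all _ hρnn) hρ.aemeasurable,
      ofReal_integral_eq_lintegral_ofReal hint (ae_of_all _ hρnn)]
  have hhalf : ENNReal.ofReal ((1 / 2) * E) < ∫⁻ t in Ioi 0, P {ω | t < ρ ω} := by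
    rw [htail, ENNReal.ofReal_lt_ofReal_iff hpos]
    linarith
  have htail_anti : Antitone fun t : ℝ => P {ω | t < ρ ω} :=
    fun _ _ h => measure_mono fun _ hω => lt_of_le_of_lt h hω
  obtain ⟨t₀, hI, ht₀⟩ := ((eventually_lt_lintegral_tsub_ofReal
    htail_anti.measurable.aemeasurable hhalf).and (Ioo_mem_nhdsGT one_pos)).exists
  refine ⟨t₀, ht₀, hI.trans_le
    (lintegral_measure_lt_tsub_le_setLIntegral_quantile hρ hρnn ht₀.1.le), ?_⟩
  intro X hX hX0 hbudget
  by_contra! hq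
  obtain ⟨c, hxc, hc⟩ := exists_between hq
  have hx_lt : x < c * ((1 / 2) * E) := by
    rw [div_lt_iff₀ hpos] at hxc
    linarith
  refine (ENNReal.ofReal_lt_ofReal_iff (hx.trans_lt hx_lt)).2 hx_lt |>.not_ge ?_
  calc ENNReal.ofReal (c * ((1 / 2) * E))
      = ENNReal.ofReal c * ENNReal.ofReal ((1 / 2) * E) :=
        ENNReal.ofReal_mul ((div_nonneg (by linarith) hpos.le).trans hxc.le)
    _ ≤ ENNReal.ofReal c * ∫⁻ t in Ioi 0, (P {ω | t < ρ ω} - ENNReal.ofReal t₀) := by gcongr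
    _ ≤ ∫⁻ ω, ENNReal.ofReal (ρ ω * X ω) ∂P :=
        ofReal_mul_lintegral_tsub_le_of_lt_quantile hρ hρnn hX hX0 hc
    _ ≤ ENNReal.ofReal x := hbudget
end

section
/- Let H : [0,1] → ℝ be absolutely continuous with H ≥ 0, H(1) = 0, and let Q̄ : (0,1) → [0,∞) be nondecreasing right-continuous with Q̄(0+) = 0 satisfying ∫₀¹ H'(t) Q̄(t) dt = 0. Then Q̄ is constant on every interval (a,b] ⊂ (0,1) on which H > 0. -/
open MeasureTheory Set

/-! Write `Q t = ∫₀^∞ 1{y < Q t} dy` and swap the integrals: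
`0 = ∫ H' Q = ∫₀^∞ (∫_{Q > y} H') dy`. As `Q` is monotone, `{Q > y}` is, up to one point, the
interval `(τ y, 1)` with `τ y = inf {Q > y}`, so the inner integral is `H 1 - H (τ y) = -H (τ y)`.
Hence `H ∘ τ ≥ 0` has integral zero and vanishes for a.e. level `y > 0`. If `Q u < Q v` for some
`u, v ∈ (a, b]`, every level `y ∈ (Q u, Q v)` has `τ y ∈ [u, v]`, where `H > 0`: a contradiction. -/

section LayerCake

variable {α : Type*} [MeasurableSpace α] {μ : Measure α} {f g : α → ℝ}

lemma setIntegral_Ioi_zero_indicator_Iio {c : ℝ} (hc : 0 ≤ c) (a : ℝ) :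
    ∫ y in Ioi 0, (Iio c).indicator (fun _ => a) y = c * a := by
  rw [integral_indicator measurableSet_Iio, Measure.restrict_restrict measurableSet_Iio,
    Iio_inter_Ioi, setIntegral_const, Measure.real, Real.volume_Ioo, sub_zero,
    ENNReal.toReal_ofReal hc, smul_eq_mul]

lemma integrableOn_Ioi_zero_indicator_Iio (c a : ℝ) :
    IntegrableOn ((Iio c).indicator fun _ => a) (Ioi 0) := by
  refine (integrable_indicator_iff measurableSet_Iio).2 (integrableOn_const ?_)
  rw [Measure.restrict_apply measurableSet_Iio, Iio_inter_Ioi, Real.volume_Ioo]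
  exact ENNReal.ofReal_ne_top

lemma integrable_prod_indicator_Iio [SFinite μ] (hf : AEStronglyMeasurable f μ)
    (hg : AEMeasurable g μ) (hg0 : 0 ≤ᵐ[μ] g) (hfg : Integrable (fun x => f x * g x) μ) :
    Integrable (Function.uncurry fun x y => (Iio (g x)).indicator (fun _ => f x) y)
      (μ.prod (volume.restrict (Ioi 0))) := by
  have hmeas : AEStronglyMeasurable
      (Function.uncurry fun x y => (Iio (g x)).indicator (fun _ => f x) y)
      (μ.prod (volume.restrict (Ioi 0))) := by
    refine ⟨{p : α × ℝ | p.2 < hg.mk g p.1}.indicator (fun p => hf.mk f p.1), ?_, ?_⟩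
    · exact (hf.stronglyMeasurable_mk.comp_measurable measurable_fst).indicator
        (measurableSet_lt measurable_snd (hg.measurable_mk.comp measurable_fst))
    · filter_upwards [Measure.quasiMeasurePreserving_fst.ae (hf.ae_eq_mk.and hg.ae_eq_mk)]
        with p hp
      simp only [Function.uncurry, indicator_apply, mem_Iio, mem_ofPred_eq, hp.1, hp.2]
  refine (integrable_prod_iff hmeas).2
    ⟨ae_of_all _ fun x => integrableOn_Ioi_zero_indicator_Iio (g x) (f x), ?_⟩
  refine hfg.norm.congr ?_
  filter_upwards [hg0] with x hx
  simp only [Function.uncurry_apply_pair, norm_indicator_eq_indicator_norm]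
  rw [setIntegral_Ioi_zero_indicator_Iio hx, norm_mul, Real.norm_of_nonneg hx, mul_comm]

theorem integral_mul_eq_integral_indicator_superlevel [SFinite μ] (hf : AEStronglyMeasurable f μ)
    (hg : AEMeasurable g μ) (hg0 : 0 ≤ᵐ[μ] g) (hfg : Integrable (fun x => f x * g x) μ) :
    ∫ x, f x * g x ∂μ = ∫ y in Ioi 0, ∫ x, {x | y < g x}.indicator f x ∂μ := calc
  ∫ x, f x * g x ∂μ = ∫ x, (∫ y in Ioi 0, (Iio (g x)).indicator (fun _ => f x) y) ∂μ := by
    refine integral_congr_ae ?_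
    filter_upwards [hg0] with x hx
    rw [setIntegral_Ioi_zero_indicator_Iio hx, mul_comm]
  _ = _ := integral_integral_swap (integrable_prod_indicator_Iio hf hg hg0 hfg)

theorem integrable_integral_indicator_superlevel [SFinite μ] (hf : AEStronglyMeasurable f μ)
    (hg : AEMeasurable g μ) (hg0 : 0 ≤ᵐ[μ] g) (hfg : Integrable (fun x => f x * g x) μ) :
    IntegrableOn (fun y => ∫ x, {x | y < g x}.indicator f x ∂μ) (Ioi 0) :=
  (integrable_prod_indicator_Iio hf hg hg0 hfg).integral_prod_right

end LayerCake

/-- The infimum of the superlevel set `{Q > y}` in `(a, b)`, with the value `b` when it is empty. -/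
noncomputable def superlevelInf (Q : ℝ → ℝ) (a b y : ℝ) : ℝ :=
  sInf (insert b (Ioo a b ∩ {t | y < Q t}))

section superlevelInf

variable {Q : ℝ → ℝ} {a b y t : ℝ}

lemma bddBelow_insert_superlevel : BddBelow (insert b (Ioo a b ∩ {t | y < Q t})) :=
  (bddBelow_Ioo.mono inter_subset_left).insert b

lemma superlevelInf_mem_Icc (hab : a ≤ b) : superlevelInf Q a b y ∈ Icc a b :=
  ⟨le_csInf (insert_nonempty _ _) (forall_mem_insert.2 ⟨hab, fun _ ht => ht.1.1.le⟩),
    csInf_le bddBelow_insert_superlevel (mem_insert b _)⟩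

lemma superlevelInf_le (ht : t ∈ Ioo a b) (hy : y < Q t) : superlevelInf Q a b y ≤ t :=
  csInf_le bddBelow_insert_superlevel (mem_insert_of_mem _ ⟨ht, hy⟩)

lemma lt_of_superlevelInf_lt (hQ : MonotoneOn Q (Ioo a b)) (ht : t ∈ Ioo a b)
    (h : superlevelInf Q a b y < t) : y < Q t := by
  obtain ⟨s, hs, hst⟩ := exists_lt_of_csInf_lt (insert_nonempty _ _) h
  rcases hs with rfl | ⟨hs, hys⟩
  · exact absurd ht.2 hst.not_gt
  · exact hys.trans_le (hQ hs ht hst.le)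

lemma le_superlevelInf (hQ : MonotoneOn Q (Ioo a b)) (ht : t ∈ Ioo a b) (hy : Q t ≤ y) :
    t ≤ superlevelInf Q a b y := by
  refine le_csInf (insert_nonempty _ _) (forall_mem_insert.2 ⟨ht.2.le, fun s hs => ?_⟩)
  by_contra! hst
  exact (hy.trans_lt hs.2).not_ge (hQ hs.1 ht hst.le)

lemma superlevel_ae_eq_Ioo (hQ : MonotoneOn Q (Ioo a b)) (hab : a ≤ b) :
    (Ioo a b ∩ {t | y < Q t} : Set ℝ) =ᵐ[volume] Ioo (superlevelInf Q a b y) b := by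
  refine ae_eq_set.2
    ⟨measure_mono_null (fun t ht => ?_) (measure_singleton (superlevelInf Q a b y)), ?_⟩
  · exact ((superlevelInf_le ht.1.1 ht.1.2).antisymm
      (not_lt.1 fun h => ht.2 ⟨h, ht.1.1.2⟩)).symm
  · refine measure_mono_null (fun t ht => ht.2 ?_) measure_empty
    have ht' : t ∈ Ioo a b := ⟨(superlevelInf_mem_Icc hab).1.trans_lt ht.1.1, ht.1.2⟩
    exact ⟨ht', lt_of_superlevelInf_lt hQ ht' ht.1.1⟩

end superlevelInf

lemma setIntegral_Ioo_eq_sub {H H' : ℝ → ℝ} {a b c : ℝ} (hint : IntegrableOn H' (Icc a b))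
    (hFTC : ∀ x ∈ Icc a b, H x = H a + ∫ t in Ioc a x, H' t) (hc : c ∈ Icc a b) :
    ∫ t in Ioo c b, H' t = H b - H c := by
  have hb : b ∈ Icc a b := ⟨hc.1.trans hc.2, le_rfl⟩
  have hI : ∀ x ∈ Icc a b, IntervalIntegrable H' volume a x := fun x hx =>
    (intervalIntegrable_iff_integrableOn_Icc_of_le hx.1).2
      (hint.mono_set (Icc_subset_Icc_right hx.2))
  have hsub := intervalIntegral.integral_interval_sub_left (hI b hb) (hI c hc)
  rw [intervalIntegral.integral_of_le hb.1, intervalIntegral.integral_of_le hc.1,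
    intervalIntegral.integral_of_le hc.2] at hsub
  rw [← integral_Ioc_eq_integral_Ioo]
  linarith [hFTC b hb, hFTC c hc]

section Vanishing

variable {H H' Q : ℝ → ℝ} {a b : ℝ}

lemma integral_indicator_superlevel_eq_sub (hint : IntegrableOn H' (Icc a b))
    (hFTC : ∀ x ∈ Icc a b, H x = H a + ∫ t in Ioc a x, H' t) (hQ : MonotoneOn Q (Ioo a b))
    (hab : a ≤ b) (y : ℝ) :
    ∫ t in Ioo a b, {t | y < Q t}.indicator H' t = H b - H (superlevelInf Q a b y) := by
  rw [← integral_indicator measurableSet_Ioo, indicator_indicator,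
    integral_congr_ae (indicator_ae_eq_of_ae_eq_set (superlevel_ae_eq_Ioo hQ hab)),
    integral_indicator measurableSet_Ioo]
  exact setIntegral_Ioo_eq_sub hint hFTC (superlevelInf_mem_Icc hab)

lemma ae_eq_zero_comp_superlevelInf (hint : IntegrableOn H' (Icc a b))
    (hFTC : ∀ x ∈ Icc a b, H x = H a + ∫ t in Ioc a x, H' t)
    (hHnn : ∀ t ∈ Icc a b, 0 ≤ H t) (hHb : H b = 0)
    (hQ : MonotoneOn Q (Ioo a b)) (hQnn : ∀ t ∈ Ioo a b, 0 ≤ Q t)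
    (hQint : IntegrableOn (fun t => H' t * Q t) (Ioo a b))
    (hzero : ∫ t in Ioo a b, H' t * Q t = 0) (hab : a ≤ b) :
    ∀ᵐ y ∂volume.restrict (Ioi 0), H (superlevelInf Q a b y) = 0 := by
  have hf : AEStronglyMeasurable H' (volume.restrict (Ioo a b)) :=
    (hint.mono_set Ioo_subset_Icc_self).aestronglyMeasurable
  have hg := aemeasurable_restrict_of_monotoneOn (μ := volume) measurableSet_Ioo hQ
  have hg0 : 0 ≤ᵐ[volume.restrict (Ioo a b)] Q :=
    (ae_restrict_iff' measurableSet_Ioo).2 (ae_of_all _ hQnn)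
  have hslice (y : ℝ) :
      ∫ t in Ioo a b, {t | y < Q t}.indicator H' t = -H (superlevelInf Q a b y) := by
    rw [integral_indicator_superlevel_eq_sub hint hFTC hQ hab, hHb, zero_sub]
  have hint' := integrable_integral_indicator_superlevel hf hg hg0 hQint
  have hlayer := integral_mul_eq_integral_indicator_superlevel hf hg hg0 hQint
  simp only [hslice, integral_neg, hzero] at hint' hlayer
  exact (integral_eq_zero_iff_of_nonneg (fun y => hHnn _ (superlevelInf_mem_Icc hab))
    (by simpa only [neg_neg] using hint'.fun_neg.integrable)).1 (by linarith)

end Vanishing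

theorem stmt_18_general (H H' Qb : ℝ → ℝ)
    (hint : MeasureTheory.IntegrableOn H' (Set.Icc 0 1))
    (hFTC : ∀ a ∈ Set.Icc (0:ℝ) 1, H a = H 0 + ∫ t in Set.Ioc 0 a, H' t)
    (hHnn : ∀ t ∈ Set.Icc (0:ℝ) 1, 0 ≤ H t) (hH1 : H 1 = 0)
    (hQmono : MonotoneOn Qb (Set.Ioo 0 1))
    (hQnn : ∀ t ∈ Set.Ioo (0:ℝ) 1, 0 ≤ Qb t)
    (hQint : MeasureTheory.IntegrableOn (fun t => H' t * Qb t) (Set.Ioo 0 1))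
    (hzero : ∫ t in Set.Ioo (0:ℝ) 1, H' t * Qb t = 0) :
    ∀ a b : ℝ, 0 < a → a < b → b < 1 → (∀ t ∈ Set.Ioc a b, 0 < H t) →
      ∀ s₁ ∈ Set.Ioc a b, ∀ s₂ ∈ Set.Ioc a b, Qb s₁ = Qb s₂ := by
  intro a b ha hab hb hHpos s₁ hs₁ s₂ hs₂
  have hae := ae_eq_zero_comp_superlevelInf hint hFTC hHnn hH1 hQmono hQnn hQint hzero zero_le_one
  have hIoc : Ioc a b ⊆ Ioo 0 1 := fun t ht => ⟨ha.trans ht.1, ht.2.trans_lt hb⟩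
  suffices key : ∀ u ∈ Ioc a b, ∀ v ∈ Ioc a b, Qb v ≤ Qb u from
    le_antisymm (key s₂ hs₂ s₁ hs₁) (key s₁ hs₁ s₂ hs₂)
  intro u hu v hv
  by_contra! hlt
  have hcrossing : Ioo (Qb u) (Qb v) ⊆ {y | H (superlevelInf Qb 0 1 y) ≠ 0} := fun y hy =>
    (hHpos _ ⟨hu.1.trans_le (le_superlevelInf hQmono (hIoc hu) hy.1.le),
      (superlevelInf_le (hIoc hv) hy.2).trans hv.2⟩).ne'
  have hlevels_pos : Ioo (Qb u) (Qb v) ⊆ Ioi 0 := fun y hy => (hQnn u (hIoc hu)).trans_lt hy.1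
  have hnull := measure_mono_null hcrossing (ae_iff.1 hae)
  rw [Measure.restrict_apply measurableSet_Ioo, inter_eq_left.2 hlevels_pos, Real.volume_Ioo,
    ENNReal.ofReal_eq_zero] at hnull
  linarith

theorem stmt_18 (H H' Qb : ℝ → ℝ)
    (hint : MeasureTheory.IntegrableOn H' (Set.Icc 0 1))
    (hFTC : ∀ a ∈ Set.Icc (0:ℝ) 1, H a = H 0 + ∫ t in Set.Ioc 0 a, H' t)
    (hHnn : ∀ t ∈ Set.Icc (0:ℝ) 1, 0 ≤ H t) (hH1 : H 1 = 0)
    (hQmono : MonotoneOn Qb (Set.Ioo 0 1))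
    (hQrc : ∀ t ∈ Set.Ioo (0:ℝ) 1, ContinuousWithinAt Qb (Set.Ici t) t)
    (hQnn : ∀ t ∈ Set.Ioo (0:ℝ) 1, 0 ≤ Qb t)
    (hQ0 : Filter.Tendsto Qb (nhdsWithin 0 (Set.Ioi 0)) (nhds 0))
    (hQint : MeasureTheory.IntegrableOn (fun t => H' t * Qb t) (Set.Ioo 0 1))
    (hzero : ∫ t in Set.Ioo (0:ℝ) 1, H' t * Qb t = 0) :
    ∀ a b : ℝ, 0 < a → a < b → b < 1 → (∀ t ∈ Set.Ioc a b, 0 < H t) →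
      ∀ s₁ ∈ Set.Ioc a b, ∀ s₂ ∈ Set.Ioc a b, Qb s₁ = Qb s₂ :=
  stmt_18_general H H' Qb hint hFTC hHnn hH1 hQmono hQnn hQint hzero
end
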